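/- arXiv:1312.1955 — 5 statements merged into one kernel-verified Lean document; each statement's English description precedes it below -/
import Mathlib

section
/- Given an equilibrium assignment (w, h, λ), let i* be a hospital of minimum cost among hospitals with h⁻¹(i) ≠ ∅, and define h' by h'(j) = i* for all j (with corresponding quota vector λ'). If all patients have identical valuations, then (w, h', λ') is also an equilibrium assignment with the same social welfare and total cost at most that of (w, h, λ). -/
/-! With identical valuations a hospital offers every patient the same utility. Stability makes
each patient's utility the maximum of these utilities over all hospitals, and the used hospital
`istar` attains that maximum for the patient assigned to it, hence for everybody. So sending all
patients to `istar` changes no utility, and it can only lower the cost since `istar` is cheapest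
among the used hospitals. -/

theorem utility_eq_of_stable_of_identical {ι α R : Type*} [Sub R] [PartialOrder R]
    {v : ι → α → R} {w : ι → R} {h : α → ι}
    (hident : ∀ i j j', v i j = v i j')
    (hstable : ∀ j i, v i j - w i ≤ v (h j) j - w (h j))
    {i : ι} {j₀ : α} (hj₀ : h j₀ = i) (j : α) :
    v i j - w i = v (h j) j - w (h j) := by
  refine le_antisymm (hstable j i) ?_
  calc v (h j) j - w (h j) = v (h j) j₀ - w (h j) := by rw [hident (h j) j j₀]
    _ ≤ v (h j₀) j₀ - w (h j₀) := hstable j₀ (h j)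
    _ = v i j - w i := by rw [hj₀, hident i j₀ j]

theorem sum_const_le_sum_comp {ι α R : Type*} [Fintype α] [AddCommMonoid R] [PartialOrder R]
    [IsOrderedAddMonoid R] {c : ι → R} {h : α → ι} {i : ι}
    (hmin : ∀ i', (∃ j, h j = i') → c i ≤ c i') :
    ∑ _j : α, c i ≤ ∑ j, c (h j) :=
  Finset.sum_le_sum fun j _ => hmin (h j) ⟨j, rfl⟩

/-- With identical valuations, reassigning all patients to a cheapest used
hospital `istar` yields another equilibrium assignment with the same social welfare and
total cost at most that of the original assignment. -/
theorem cheapest_hospital_reassignment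
    {k m : ℕ} (v : Fin k → Fin m → ℝ) (w : Fin k → ℝ) (h : Fin m → Fin k)
    (c : Fin k → ℝ) (B : ℝ) (istar : Fin k)
    (hident : ∀ (i : Fin k) (j j' : Fin m), v i j = v i j')
    (hfeas : ∑ j : Fin m, c (h j) ≤ B)
    (hIR : ∀ j : Fin m, 0 ≤ v (h j) j - w (h j))
    (hstable : ∀ (j : Fin m) (i : Fin k), v i j - w i ≤ v (h j) j - w (h j))
    (hused : ∃ j : Fin m, h j = istar)
    (hmin : ∀ i : Fin k, (∃ j : Fin m, h j = i) → c istar ≤ c i) :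
    -- (w, h', λ') with h' constant equal to istar is an equilibrium assignment:
    (∀ j : Fin m, 0 ≤ v istar j - w istar) ∧
    (∀ (j : Fin m) (i : Fin k), v i j - w i ≤ v istar j - w istar) ∧
    (∑ j : Fin m, c istar ≤ B) ∧
    -- same social welfare:
    (∑ j : Fin m, (v istar j - w istar) = ∑ j : Fin m, (v (h j) j - w (h j))) ∧
    -- total cost at most that of (w, h, λ):
    (∑ j : Fin m, c istar ≤ ∑ j : Fin m, c (h j)) := by
  obtain ⟨j₀, hj₀⟩ := hused
  have hutil := utility_eq_of_stable_of_identical hident hstable hj₀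
  have hcost := sum_const_le_sum_comp hmin
  refine ⟨fun j => hutil j ▸ hIR j, fun j i => hutil j ▸ hstable j i, hcost.trans hfeas,
    Finset.sum_congr rfl fun j _ => hutil j, hcost⟩
end

section
/- In any stable and feasible matching of a unit-demand auction, identical goods have equal prices: if goods i and i' satisfy v_{ij} = v_{i'j} for every bidder j, then p_i = p_{i'}. -/
theorem price_le_of_valuation_le {G B α : Type*} [AddCommGroup α] [LinearOrder α]
    [IsOrderedAddMonoid α] {v : G → B → α} {u : B → α} {p : G → α} {μ : Finset (G × B)}
    {a b : G} (hp : 0 ≤ p b)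
    (hmatched : ∀ e ∈ μ, u e.2 = v e.1 e.2 - p e.1)
    (hunmatched : (∀ e ∈ μ, e.1 ≠ a) → p a = 0)
    (hstable : ∀ j, v b j - p b ≤ u j) (hle : ∀ j, v a j ≤ v b j) :
    p a ≤ p b := by
  by_cases hmatchedA : ∃ e ∈ μ, e.1 = a
  · obtain ⟨e, he, rfl⟩ := hmatchedA
    have hbid : v b e.2 - p b ≤ v e.1 e.2 - p e.1 := hmatched e he ▸ hstable e.2
    exact (sub_le_sub_iff_left _).mp ((sub_le_sub_right (hle e.2) _).trans hbid)
  · push Not at hmatchedA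
    exact (hunmatched hmatchedA).symm ▸ hp

theorem identical_goods_equal_prices_general {g m : ℕ} (v : Fin g → Fin m → ℤ)
    (u : Fin m → ℤ) (p : Fin g → ℤ) (μ : Finset (Fin g × Fin m))
    (hp : ∀ i', 0 ≤ p i')
    -- feasibility:
    (hmatched : ∀ e ∈ μ, u e.2 = v e.1 e.2 - p e.1)
    (hunmatchedGood : ∀ i' : Fin g, (∀ e ∈ μ, e.1 ≠ i') → p i' = 0)
    -- stability:
    (hstable : ∀ (i' : Fin g) (j : Fin m), v i' j - p i' ≤ u j)
    -- identical goods: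
    (i i' : Fin g) (hident : ∀ j : Fin m, v i j = v i' j) :
    p i = p i' :=
  le_antisymm
    (price_le_of_valuation_le (hp i') hmatched (hunmatchedGood i) (hstable i')
      fun j => (hident j).le)
    (price_le_of_valuation_le (hp i) hmatched (hunmatchedGood i') (hstable i)
      fun j => (hident j).ge)

/-- in any stable and feasible matching of a unit-demand auction,
identical goods have equal prices. -/
theorem identical_goods_equal_prices {g m : ℕ} (v : Fin g → Fin m → ℤ)
    (u : Fin m → ℤ) (p : Fin g → ℤ) (μ : Finset (Fin g × Fin m))
    (hv : ∀ i j, 0 ≤ v i j) (hu : ∀ j, 0 ≤ u j) (hp : ∀ i', 0 ≤ p i')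
    (hμ : ∀ e ∈ μ, ∀ e' ∈ μ, (e.1 = e'.1 → e = e') ∧ (e.2 = e'.2 → e = e'))
    -- feasibility:
    (hmatched : ∀ e ∈ μ, u e.2 = v e.1 e.2 - p e.1)
    (hunmatchedBidder : ∀ j : Fin m, (∀ e ∈ μ, e.2 ≠ j) → u j = 0)
    (hunmatchedGood : ∀ i' : Fin g, (∀ e ∈ μ, e.1 ≠ i') → p i' = 0)
    -- stability:
    (hstable : ∀ (i' : Fin g) (j : Fin m), v i' j - p i' ≤ u j)
    -- identical goods:
    (i i' : Fin g) (hident : ∀ j : Fin m, v i j = v i' j) :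
    p i = p i' :=
  identical_goods_equal_prices_general v u p μ hp hmatched hunmatchedGood hstable i i' hident
end

section
/- Let (w, h, λ) be an equilibrium assignment of a Provision-after-Wait instance and let (g, m, v̂) be the unit-demand auction built from any quota vector λ̂ with λ̂_i ≥ λ_i for all i (hospital i gives λ̂_i identical goods). Define the matching (u, p, μ) by u_j = v_{h(j)j} − w_{h(j)}, p_{(i,r)} = w_i for all copies r, and μ matching the patients assigned to hospital i with distinct copies of hospital i. Then (u, p, μ) is stable and weakly feasible. -/
/-!
Hospital `i` has at most `λ̂ i` assigned patients, so they can be sent injectively to its `λ̂ i`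
copies; stability of the auction is then the equilibrium condition itself, as every copy of
hospital `i` is priced at `w i`.
-/

open Finset Function

theorem exists_injective_sigma_fin_of_card_fiber_le {α β : Type*} [Fintype α] [DecidableEq β]
    (f : α → β) (q : β → ℕ) (hq : ∀ b, #{a | f a = b} ≤ q b) :
    ∃ g : α → (b : β) × Fin (q b), Injective g ∧ ∀ a, (g a).1 = f a := by
  have hfiber (b : β) : Nonempty ({a // f a = b} ↪ Fin (q b)) :=
    Function.Embedding.nonempty_of_card_le <| by
      simpa only [Fintype.card_subtype, Fintype.card_fin] using hq b
  let e (b : β) := (hfiber b).some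
  refine ⟨Sigma.map id (fun b => e b) ∘ (Equiv.sigmaFiberEquiv f).symm, ?_, fun _ => rfl⟩
  exact (injective_id.sigma_map fun b => (e b).injective).comp (Equiv.injective _)

theorem equilibrium_induces_stable_matching_general {k m : ℕ}
    (v : Fin k → Fin m → ℝ) (w : Fin k → ℝ) (h : Fin m → Fin k)
    (lamhat : Fin k → ℕ)
    (hquota : ∀ i : Fin k,
      (Finset.univ.filter (fun j => h j = i)).card ≤ lamhat i)
    (hstable : ∀ (j : Fin m) (i : Fin k), v i j - w i ≤ v (h j) j - w (h j)) :
    ∃ μ : Finset (((i : Fin k) × Fin (lamhat i)) × Fin m),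
      -- μ is a partial matching
      (∀ e ∈ μ, ∀ e' ∈ μ, (e.1 = e'.1 → e = e') ∧ (e.2 = e'.2 → e = e')) ∧
      -- it matches each patient with a copy of his assigned hospital
      (∀ e ∈ μ, e.1.1 = h e.2) ∧
      (∀ j : Fin m, ∃ e ∈ μ, e.2 = j) ∧
      -- weak feasibility of (u, p, μ) with u j = v (h j) j - w (h j), p (i,r) = w i
      (∀ e ∈ μ, v (h e.2) e.2 - w (h e.2) = v e.1.1 e.2 - w e.1.1) ∧
      -- stability
      (∀ (g : (i : Fin k) × Fin (lamhat i)) (j : Fin m),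
        v g.1 j - w g.1 ≤ v (h j) j - w (h j)) := by
  obtain ⟨copy, hinj, hcopy⟩ := exists_injective_sigma_fin_of_card_fiber_le h lamhat hquota
  refine ⟨univ.image fun j => (copy j, j), ?_, ?_, ?_, ?_, fun g j => hstable j g.1⟩
  · simp only [mem_image, mem_univ, true_and, forall_exists_index, forall_apply_eq_imp_iff,
      Prod.mk.injEq]
    exact fun a b => ⟨fun hab => ⟨hab, hinj hab⟩, fun hab => ⟨congrArg copy hab, hab⟩⟩
  · simpa using hcopy
  · exact fun j => ⟨(copy j, j), mem_image_of_mem _ (mem_univ j), rfl⟩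
  · simp [hcopy]

/-- an equilibrium assignment `(w, h, λ)` of a Provision-after-Wait
instance induces a stable, weakly feasible matching of the unit-demand auction built
from any quota vector `λ̂ ≥ λ` (hospital `i` gives `λ̂ i` identical goods with prices
`w i`, bidders' utilities `u j = v (h j) j − w (h j)`). -/
theorem equilibrium_induces_stable_matching {k m : ℕ}
    (v : Fin k → Fin m → ℝ) (w : Fin k → ℝ) (h : Fin m → Fin k)
    (lamhat : Fin k → ℕ)
    (hquota : ∀ i : Fin k,
      (Finset.univ.filter (fun j => h j = i)).card ≤ lamhat i)
    (hIR : ∀ j : Fin m, 0 ≤ v (h j) j - w (h j))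
    (hstable : ∀ (j : Fin m) (i : Fin k), v i j - w i ≤ v (h j) j - w (h j)) :
    ∃ μ : Finset (((i : Fin k) × Fin (lamhat i)) × Fin m),
      -- μ is a partial matching
      (∀ e ∈ μ, ∀ e' ∈ μ, (e.1 = e'.1 → e = e') ∧ (e.2 = e'.2 → e = e')) ∧
      -- it matches each patient with a copy of his assigned hospital
      (∀ e ∈ μ, e.1.1 = h e.2) ∧
      (∀ j : Fin m, ∃ e ∈ μ, e.2 = j) ∧
      -- weak feasibility of (u, p, μ) with u j = v (h j) j - w (h j), p (i,r) = w i
      (∀ e ∈ μ, v (h e.2) e.2 - w (h e.2) = v e.1.1 e.2 - w e.1.1) ∧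
      -- stability
      (∀ (g : (i : Fin k) × Fin (lamhat i)) (j : Fin m),
        v g.1 j - w g.1 ≤ v (h j) j - w (h j)) :=
  equilibrium_induces_stable_matching_general v w h lamhat hquota hstable
end

section
/- Under the dynamics with independent patient population, the waiting-time vector never exceeds the minimum equilibrium waiting-time vector: if w(t) ≤ w̄ componentwise and w_i(t) = w̄_i for some hospital i, then the demand rate satisfies d_i(t) ≤ λ_i, hence the right derivative of w_i at t is nonpositive. -/
/-! If hospital `b` is optimal for a type at waiting times `w ≤ w̄` with `w_b = w̄_b`, then the
type's equilibrium hospital `a` is optimal too: its utility can only have gone up since `w̄`,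
while that of `b` is unchanged. So tie-breaking forbids demand for `i` from types not assigned to
`i` by `h̄`, and each of the remaining types contributes demand at most `1`. -/

theorem utility_maximizer_of_equilibrium_le {ι : Type*} {v w wbar : ι → ℝ} {a b : ι}
    (hle : w a ≤ wbar a) (heq : w b = wbar b) (hstable : v b - wbar b ≤ v a - wbar a)
    (hmax : ∀ c, v c - w c ≤ v b - w b) : ∀ c, v c - w c ≤ v a - w a := fun c => by
  linarith [hmax c]

theorem Finset.sum_le_card_of_eq_zero_of_le_one {τ : Type*} [Fintype τ] {f : τ → ℝ}
    {s : Finset τ} (hzero : ∀ j ∉ s, f j = 0) (hle : ∀ j, f j ≤ 1) : ∑ j, f j ≤ s.card := by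
  rw [← Finset.sum_subset s.subset_univ fun j _ hj => hzero j hj]
  simpa using Finset.sum_le_card_nsmul s f 1 fun j _ => hle j

theorem demand_rate_bounded_general {k m : ℕ}
    (v : Fin k → Fin m → ℝ) (lam : Fin k → ℕ)
    (w wbar : Fin k → ℝ) (hbar : Fin m → Fin k)
    (d : Fin k → Fin m → ℝ) (i : Fin k)
    -- w(t) ≤ w̄ componentwise, and w_i(t) = w̄_i:
    (hle : ∀ i', w i' ≤ wbar i') (heq : w i = wbar i)
    -- (w̄, h̄, λ) is an equilibrium assignment:
    (hquota : ∀ i' : Fin k,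
      (Finset.univ.filter (fun j => hbar j = i')).card ≤ lam i')
    (hstablebar : ∀ (j : Fin m) (i' : Fin k),
      v i' j - wbar i' ≤ v (hbar j) j - wbar (hbar j))
    -- demand rates at time t:
    (hd0 : ∀ i' j, 0 ≤ d i' j) (hd1 : ∀ i' j, d i' j ≤ 1)
    (hdmax : ∀ (i' : Fin k) (j : Fin m), 0 < d i' j →
      ∀ i'' : Fin k, v i'' j - w i'' ≤ v i' j - w i')
    -- tie-breaking: if h̄(j) ≠ i and h̄(j) also maximizes j's utility at time t,
    -- then j does not choose i:
    (htie : ∀ j : Fin m, hbar j ≠ i →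
      (∀ i' : Fin k, v i' j - w i' ≤ v (hbar j) j - w (hbar j)) → d i j = 0) :
    (∀ j : Fin m, hbar j ≠ i → d i j = 0) ∧
    ∑ j : Fin m, d i j ≤ lam i := by
  have hzero : ∀ j, hbar j ≠ i → d i j = 0 := fun j hne =>
    (hd0 i j).eq_or_lt.elim Eq.symm fun hpos => htie j hne <|
      utility_maximizer_of_equilibrium_le (v := (v · j)) (hle _) heq (hstablebar j i)
        (hdmax i j hpos)
  refine ⟨hzero, ?_⟩
  calc ∑ j, d i j ≤ (Finset.univ.filter (fun j => hbar j = i)).card :=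
        Finset.sum_le_card_of_eq_zero_of_le_one
          (fun j hj => hzero j (by simpa using hj)) (hd1 i)
    _ ≤ lam i := by exact_mod_cast hquota i

/-- under the dynamics, if `w(t) ≤ w̄` componentwise and `w_i(t) = w̄_i`
for some hospital `i`, then every type `j` with `h̄(j) ≠ i` has zero demand for `i`,
hence the demand rate satisfies `d_i(t) ≤ λ_i` (so the right derivative of `w_i` at
`t` is nonpositive). -/
theorem demand_rate_bounded {k m : ℕ}
    (v : Fin k → Fin m → ℝ) (lam : Fin k → ℕ)
    (w wbar : Fin k → ℝ) (hbar : Fin m → Fin k)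
    (d : Fin k → Fin m → ℝ) (i : Fin k)
    -- w(t) ≤ w̄ componentwise, and w_i(t) = w̄_i:
    (hle : ∀ i', w i' ≤ wbar i') (heq : w i = wbar i)
    -- (w̄, h̄, λ) is an equilibrium assignment:
    (hquota : ∀ i' : Fin k,
      (Finset.univ.filter (fun j => hbar j = i')).card ≤ lam i')
    (hstablebar : ∀ (j : Fin m) (i' : Fin k),
      v i' j - wbar i' ≤ v (hbar j) j - wbar (hbar j))
    -- demand rates at time t:
    (hd0 : ∀ i' j, 0 ≤ d i' j) (hd1 : ∀ i' j, d i' j ≤ 1)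
    (hdsum : ∀ j, ∑ i' : Fin k, d i' j = 1)
    (hdmax : ∀ (i' : Fin k) (j : Fin m), 0 < d i' j →
      ∀ i'' : Fin k, v i'' j - w i'' ≤ v i' j - w i')
    -- tie-breaking: if h̄(j) ≠ i and h̄(j) also maximizes j's utility at time t,
    -- then j does not choose i:
    (htie : ∀ j : Fin m, hbar j ≠ i →
      (∀ i' : Fin k, v i' j - w i' ≤ v (hbar j) j - w (hbar j)) → d i j = 0) :
    (∀ j : Fin m, hbar j ≠ i → d i j = 0) ∧
    ∑ j : Fin m, d i j ≤ lam i :=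
  demand_rate_bounded_general v lam w wbar hbar d i hle heq hquota hstablebar hd0 hd1 hdmax htie
end

section
/- Let v : [0,1] → ℝ be nondecreasing, concave, differentiable with v(0) = 0, and let p : [0,1] → [0,1] be nondecreasing with ∫₀¹ p(x) dx = B and p constant on [x₀, 1] where v is constant on [x₀, 1] and strictly increasing on [0, x₀]. Then ∫₀^{x₀} (B − p(x))(1 − x) v'(x) dx ≥ 0. -/
/-!
Put `g x = (1 - x) v'(x)`; concavity and monotonicity of `v` make `g` nonnegative and antitone.
Since `p` is monotone, `B - p` changes sign once, from `+` to `-`, at some `c`, so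
`(B - p x) (g x - g c) ≥ 0` pointwise and `∫ (B - p) g ≥ g c ∫ (B - p)`. Finally
`∫₀^{x₀} (B - p) ≥ 0` because the mean of a monotone function over `[0, x₀]` is at most its
mean `B` over `[0, 1]`.
-/

open intervalIntegral Set

theorem MonotoneOn.exists_crossing {p : ℝ → ℝ} {a b : ℝ} (B : ℝ) (hab : a ≤ b)
    (hp : MonotoneOn p (Icc a b)) :
    ∃ c ∈ Icc a b, (∀ x ∈ Icc a b, x < c → p x ≤ B) ∧ (∀ x ∈ Icc a b, c < x → B ≤ p x) := by
  set S := insert a {x ∈ Icc a b | p x ≤ B}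
  have hS_le : ∀ y ∈ S, y ≤ b := by
    rintro y (rfl | hy)
    exacts [hab, hy.1.2]
  have hS_bdd : BddAbove S := ⟨b, hS_le⟩
  have hS_ne : S.Nonempty := ⟨a, mem_insert _ _⟩
  have ha : a ≤ sSup S := le_csSup hS_bdd (mem_insert _ _)
  refine ⟨sSup S, ⟨ha, csSup_le hS_ne hS_le⟩, fun x hx hxc => ?_, fun x hx hcx => ?_⟩
  · obtain ⟨y, hyS, hxy⟩ := exists_lt_of_lt_csSup hS_ne hxc
    rcases hyS with rfl | hy
    · exact absurd hx.1 (not_le.2 hxy)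
    · exact (hp hx hy.1 hxy.le).trans hy.2
  · by_contra! h
    exact not_le.2 hcx (le_csSup hS_bdd (mem_insert_of_mem _ ⟨hx, h.le⟩))

theorem integral_mul_nonneg_of_antitoneOn {f g : ℝ → ℝ} {a b c : ℝ} (hab : a ≤ b)
    (hf : IntervalIntegrable f MeasureTheory.volume a b)
    (hfg : IntervalIntegrable (fun x => f x * g x) MeasureTheory.volume a b)
    (hg : AntitoneOn g (Icc a b)) (hc : c ∈ Icc a b) (hgc : 0 ≤ g c)
    (hf_pos : ∀ x ∈ Icc a b, x < c → 0 ≤ f x) (hf_neg : ∀ x ∈ Icc a b, c < x → f x ≤ 0)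
    (hf_int : 0 ≤ ∫ x in a..b, f x) :
    0 ≤ ∫ x in a..b, f x * g x := by
  have hpointwise : ∀ x ∈ Icc a b, f x * g c ≤ f x * g x := by
    intro x hx
    rcases lt_trichotomy x c with hxc | rfl | hcx
    · exact mul_le_mul_of_nonneg_left (hg hx hc hxc.le) (hf_pos x hx hxc)
    · exact le_rfl
    · exact mul_le_mul_of_nonpos_left (hg hc hx hcx.le) (hf_neg x hx hcx)
  calc 0 ≤ (∫ x in a..b, f x) * g c := mul_nonneg hf_int hgc
    _ = ∫ x in a..b, f x * g c := (integral_mul_const _ _).symm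
    _ ≤ ∫ x in a..b, f x * g x := integral_mono_on hab (hf.mul_const _) hfg hpointwise

theorem MonotoneOn.sub_mul_integral_le {p : ℝ → ℝ} {a b c : ℝ} (hac : a ≤ c) (hcb : c ≤ b)
    (hp : MonotoneOn p (Icc a b)) :
    (b - a) * ∫ x in a..c, p x ≤ (c - a) * ∫ x in a..b, p x := by
  have hc : c ∈ Icc a b := ⟨hac, hcb⟩
  have hp_ac : IntervalIntegrable p MeasureTheory.volume a c :=
    (hp.mono <| uIcc_of_le hac ▸ Icc_subset_Icc_right hcb).intervalIntegrable
  have hp_cb : IntervalIntegrable p MeasureTheory.volume c b :=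
    (hp.mono <| uIcc_of_le hcb ▸ Icc_subset_Icc_left hac).intervalIntegrable
  have h_left : ∫ x in a..c, p x ≤ (c - a) * p c := by
    simpa using integral_mono_on hac hp_ac intervalIntegrable_const
      fun x hx => hp ⟨hx.1, hx.2.trans hcb⟩ hc hx.2
  have h_right : (b - c) * p c ≤ ∫ x in c..b, p x := by
    simpa using integral_mono_on hcb intervalIntegrable_const hp_cb
      fun x hx => hp hc ⟨hac.trans hx.1, hx.2⟩ hx.1
  rw [← integral_add_adjacent_intervals hp_ac hp_cb]
  nlinarith [mul_le_mul_of_nonneg_left h_left (sub_nonneg.2 hcb),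
    mul_le_mul_of_nonneg_left h_right (sub_nonneg.2 hac)]

section Concave

variable {v : ℝ → ℝ} {a b : ℝ}

theorem ConcaveOn.sub_mul_deriv_nonneg (hconc : ConcaveOn ℝ (Icc a b) v)
    (hmono : MonotoneOn v (Icc a b)) (hdiff : ∀ x ∈ Icc a b, DifferentiableAt ℝ v x)
    {x : ℝ} (hx : x ∈ Icc a b) : 0 ≤ (b - x) * deriv v x := by
  rcases hx.2.eq_or_lt with rfl | hxb
  · simp
  have hb : b ∈ Icc a b := ⟨hx.1.trans hxb.le, le_rfl⟩
  have hslope : 0 ≤ slope v x b := by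
    rw [slope_def_field]
    exact div_nonneg (sub_nonneg.2 (hmono hx hb hxb.le)) (sub_nonneg.2 hxb.le)
  exact mul_nonneg (sub_nonneg.2 hxb.le)
    (hslope.trans (hconc.slope_le_deriv hx hb hxb (hdiff x hx)))

theorem ConcaveOn.antitoneOn_sub_mul_deriv (hconc : ConcaveOn ℝ (Icc a b) v)
    (hmono : MonotoneOn v (Icc a b)) (hdiff : ∀ x ∈ Icc a b, DifferentiableAt ℝ v x) :
    AntitoneOn (fun x => (b - x) * deriv v x) (Icc a b) := by
  intro x hx y hy hxy
  rcases hy.2.eq_or_lt with rfl | hyb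
  · simpa using hconc.sub_mul_deriv_nonneg hmono hdiff hx
  have hy_deriv : 0 ≤ deriv v y := by
    simpa [sub_pos.2 hyb] using hconc.sub_mul_deriv_nonneg hmono hdiff hy
  exact mul_le_mul (by linarith) (hconc.antitoneOn_deriv hdiff hx hy hxy) hy_deriv
    (sub_nonneg.2 hx.2)

end Concave

theorem core_lottery_inequality_general
    (v p : ℝ → ℝ) (B x₀ : ℝ)
    (hx₀ : x₀ ∈ Set.Icc (0 : ℝ) 1)
    -- v : [0,1] → ℝ nondecreasing, concave, differentiable, v 0 = 0
    (hvmono : MonotoneOn v (Set.Icc 0 1))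
    (hvconc : ConcaveOn ℝ (Set.Icc 0 1) v)
    (hvdiff : ∀ x ∈ Set.Icc (0 : ℝ) 1, DifferentiableAt ℝ v x)
    -- p : [0,1] → [0,1] nondecreasing with ∫₀¹ p = B, constant on [x₀, 1]
    (hpmono : MonotoneOn p (Set.Icc 0 1))
    (hpB : ∫ x in (0 : ℝ)..1, p x = B)
    -- integrability of the integrand
    (hint : IntervalIntegrable (fun x => (B - p x) * ((1 - x) * deriv v x))
      MeasureTheory.volume 0 x₀) :
    0 ≤ ∫ x in (0 : ℝ)..x₀, (B - p x) * ((1 - x) * deriv v x) := by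
  obtain ⟨h0, h1⟩ := hx₀
  have hsub : Icc 0 x₀ ⊆ Icc (0 : ℝ) 1 := Icc_subset_Icc_right h1
  have hp_int : IntervalIntegrable p MeasureTheory.volume 0 x₀ :=
    (hpmono.mono <| uIcc_of_le h0 ▸ hsub).intervalIntegrable
  have hmean : 0 ≤ ∫ x in (0 : ℝ)..x₀, (B - p x) := by
    have hle := hpmono.sub_mul_integral_le h0 h1
    rw [integral_sub intervalIntegrable_const hp_int, integral_const, smul_eq_mul]
    rw [hpB] at hle
    linarith
  obtain ⟨c, hc, hp_below, hp_above⟩ := (hpmono.mono hsub).exists_crossing B h0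
  exact integral_mul_nonneg_of_antitoneOn h0 (intervalIntegrable_const.sub hp_int) hint
    ((hvconc.antitoneOn_sub_mul_deriv hvmono hvdiff).mono hsub) hc
    (hvconc.sub_mul_deriv_nonneg hvmono hvdiff (hsub hc))
    (fun x hx hxc => sub_nonneg.2 (hp_below x hx hxc))
    (fun x hx hcx => sub_nonpos.2 (hp_above x hx hcx)) hmean

/-- the core inequality `∫₀^{x₀} (B − p(x))(1 − x) v'(x) dx ≥ 0` in the
two-hospital lottery comparison. -/
theorem core_lottery_inequality
    (v p : ℝ → ℝ) (B x₀ : ℝ)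
    (hx₀ : x₀ ∈ Set.Icc (0 : ℝ) 1)
    -- v : [0,1] → ℝ nondecreasing, concave, differentiable, v 0 = 0
    (hvmono : MonotoneOn v (Set.Icc 0 1))
    (hvconc : ConcaveOn ℝ (Set.Icc 0 1) v)
    (hvdiff : ∀ x ∈ Set.Icc (0 : ℝ) 1, DifferentiableAt ℝ v x)
    (hv0 : v 0 = 0)
    -- v strictly increasing on [0, x₀] and constant on [x₀, 1]
    (hvstrict : StrictMonoOn v (Set.Icc 0 x₀))
    (hvconst : ∀ x ∈ Set.Icc x₀ 1, v x = v x₀)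
    -- p : [0,1] → [0,1] nondecreasing with ∫₀¹ p = B, constant on [x₀, 1]
    (hpmono : MonotoneOn p (Set.Icc 0 1))
    (hprange : ∀ x ∈ Set.Icc (0 : ℝ) 1, p x ∈ Set.Icc (0 : ℝ) 1)
    (hpconst : ∀ x ∈ Set.Icc x₀ 1, p x = p x₀)
    (hpint : IntervalIntegrable p MeasureTheory.volume 0 1)
    (hpB : ∫ x in (0 : ℝ)..1, p x = B)
    -- integrability of the integrand
    (hint : IntervalIntegrable (fun x => (B - p x) * ((1 - x) * deriv v x))
      MeasureTheory.volume 0 x₀) :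
    0 ≤ ∫ x in (0 : ℝ)..x₀, (B - p x) * ((1 - x) * deriv v x) :=
  core_lottery_inequality_general v p B x₀ hx₀ hvmono hvconc hvdiff hpmono hpB hint
end
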